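/- arXiv:2102.09488 — 4 statements merged into one kernel-verified Lean document; each statement's English description precedes it below -/
import Mathlib

section
/- Let X_0, ..., X_{T-1} be random variables with 0 ≤ X_t ≤ ε almost surely, and suppose for each t there are events A_t with P(A_t) ≥ 1 − δ_t such that on A_t, X_t = √(Γ_t · G_t) with Γ_t ≤ γ, where G_t ≥ 0 satisfies E[Σ_{t=0}^{T-1} G_t] ≤ C. Then E[Σ_{t=0}^{T-1} X_t] ≤ √(γ C T) + ε Σ_{t=0}^{T-1} δ_t. -/
/-!
Cut each round at the event `A t`: there `X t ≤ √γ · √(G t)`, whose expectation is at most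
`√γ · √(E G t)` by Jensen's inequality for the concave square root; off the event the excess
over `√γ · √(G t)` is at most `ε` and lives on a set of probability at most `δ t`. Summing over
the rounds, Cauchy–Schwarz gives `∑ √(E G t) ≤ √(T · ∑ E G t) ≤ √(T C)`.
-/

open MeasureTheory Finset

lemma Real.sqrt_le_one_add_abs (x : ℝ) : √x ≤ 1 + |x| :=
  (Real.sqrt_le_left (by positivity)).2 (by nlinarith [le_abs_self x, abs_nonneg x])

lemma Real.sum_sqrt_le_sqrt_card_mul_sum {ι : Type*} (s : Finset ι) {f : ι → ℝ}
    (hf : ∀ i ∈ s, 0 ≤ f i) : ∑ i ∈ s, √(f i) ≤ √(#s * ∑ i ∈ s, f i) := by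
  rw [Real.le_sqrt (sum_nonneg fun _ _ ↦ Real.sqrt_nonneg _)
    (mul_nonneg (Nat.cast_nonneg _) (sum_nonneg hf))]
  calc (∑ i ∈ s, √(f i)) ^ 2 ≤ #s * ∑ i ∈ s, √(f i) ^ 2 := sq_sum_le_card_mul_sum_sq
    _ = #s * ∑ i ∈ s, f i := by
      rw [sum_congr rfl fun i hi ↦ Real.sq_sqrt (hf i hi)]

namespace MeasureTheory

variable {Ω : Type*} [MeasurableSpace Ω] {μ : Measure Ω}

lemma Integrable.sqrt [IsFiniteMeasure μ] {f : Ω → ℝ} (hf : Integrable f μ) :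
    Integrable (fun ω ↦ √(f ω)) μ := by
  refine ((integrable_const 1).add hf.abs).mono'
    (Real.continuous_sqrt.comp_aestronglyMeasurable hf.1) (ae_of_all _ fun ω ↦ ?_)
  rw [Real.norm_of_nonneg (Real.sqrt_nonneg _)]
  exact Real.sqrt_le_one_add_abs _

variable [IsProbabilityMeasure μ]

lemma integral_sqrt_le_sqrt_integral {f : Ω → ℝ} (hf : Integrable f μ)
    (hf0 : ∀ᵐ ω ∂μ, 0 ≤ f ω) : ∫ ω, √(f ω) ∂μ ≤ √(∫ ω, f ω ∂μ) :=
  Real.strictConcaveOn_sqrt.concaveOn.le_map_integral Real.continuous_sqrt.continuousOn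
    isClosed_Ici hf0 hf hf.sqrt

lemma integral_le_mul_one_sub_measureReal {Z : Ω → ℝ} {ε : ℝ} {A : Set Ω}
    (hZ : Integrable Z μ) (hε : 0 ≤ ε) (hZε : ∀ᵐ ω ∂μ, Z ω ≤ ε)
    (hZA : ∀ᵐ ω ∂μ, ω ∈ A → Z ω = 0) : ∫ ω, Z ω ∂μ ≤ ε * (1 - μ.real A) := by
  -- `A` need not be measurable, but up to a null set it lies inside the measurable event `{Z' = 0}`
  set Z' := hZ.1.mk Z
  set E := {ω | Z' ω ≠ 0}
  have hE : MeasurableSet E :=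
    (hZ.1.stronglyMeasurable_mk.measurable (measurableSet_singleton 0)).compl
  have hAE : μ.real A ≤ μ.real Eᶜ := by
    refine ENNReal.toReal_mono (measure_ne_top _ _) (measure_mono_ae ?_)
    filter_upwards [hZA, hZ.1.ae_eq_mk] with ω hω hZZ' hωA
    show ω ∈ Eᶜ
    simpa [E, Z', ← hZZ'] using hω hωA
  have hZE : ∀ᵐ ω ∂μ, Z ω ≤ E.indicator (fun _ ↦ ε) ω := by
    filter_upwards [hZε, hZ.1.ae_eq_mk] with ω hω hZZ'
    by_cases hωE : ω ∈ E
    · simpa [hωE] using hω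
    · simp_all [E, Z']
  calc ∫ ω, Z ω ∂μ ≤ ∫ ω, E.indicator (fun _ ↦ ε) ω ∂μ :=
        integral_mono_ae hZ ((integrable_const ε).indicator hE) hZE
    _ = ε * (1 - μ.real Eᶜ) := by
        rw [integral_indicator_const _ hE, probReal_compl_eq_one_sub hE, smul_eq_mul]
        ring
    _ ≤ ε * (1 - μ.real A) := by gcongr

lemma integral_le_integral_add_mul_one_sub_measureReal {X f : Ω → ℝ} {ε : ℝ} {A : Set Ω}
    (hX : Integrable X μ) (hf : Integrable f μ) (hε : 0 ≤ ε) (hXε : ∀ᵐ ω ∂μ, X ω ≤ ε)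
    (hf0 : ∀ᵐ ω ∂μ, 0 ≤ f ω) (hXf : ∀ᵐ ω ∂μ, ω ∈ A → X ω ≤ f ω) :
    ∫ ω, X ω ∂μ ≤ ∫ ω, f ω ∂μ + ε * (1 - μ.real A) := by
  have hexcess : Integrable (fun ω ↦ max (X ω - f ω) 0) μ := (hX.sub hf).pos_part
  have hexcess_le : ∫ ω, max (X ω - f ω) 0 ∂μ ≤ ε * (1 - μ.real A) := by
    refine integral_le_mul_one_sub_measureReal hexcess hε ?_ ?_
    · filter_upwards [hXε, hf0] with ω hXω hfω
      exact max_le (by linarith) hε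
    · filter_upwards [hXf] with ω hω hωA
      exact max_eq_right (sub_nonpos.2 (hω hωA))
  calc ∫ ω, X ω ∂μ ≤ ∫ ω, f ω + max (X ω - f ω) 0 ∂μ :=
        integral_mono hX (hf.add hexcess) fun ω ↦ by linarith [le_max_left (X ω - f ω) 0]
    _ ≤ ∫ ω, f ω ∂μ + ε * (1 - μ.real A) := by
        rw [integral_add hf hexcess]
        linarith

lemma integral_le_sqrt_mul_sqrt_integral_add {X Γ G : Ω → ℝ} {γ ε δ : ℝ} {A : Set Ω}
    (hγ : 0 ≤ γ) (hε : 0 ≤ ε) (hXε : ∀ᵐ ω ∂μ, X ω ≤ ε) (hA : 1 - δ ≤ μ.real A)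
    (hXG : ∀ᵐ ω ∂μ, ω ∈ A → X ω = √(Γ ω * G ω) ∧ Γ ω ≤ γ) (hG0 : ∀ᵐ ω ∂μ, 0 ≤ G ω)
    (hX : Integrable X μ) (hG : Integrable G μ) :
    ∫ ω, X ω ∂μ ≤ √γ * √(∫ ω, G ω ∂μ) + ε * δ := by
  have hXG' : ∀ᵐ ω ∂μ, ω ∈ A → X ω ≤ √γ * √(G ω) := by
    filter_upwards [hXG, hG0] with ω hω hGω hωA
    obtain ⟨hXω, hΓω⟩ := hω hωA
    rw [hXω, ← Real.sqrt_mul hγ]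
    exact Real.sqrt_le_sqrt (mul_le_mul_of_nonneg_right hΓω hGω)
  calc ∫ ω, X ω ∂μ ≤ ∫ ω, √γ * √(G ω) ∂μ + ε * (1 - μ.real A) :=
        integral_le_integral_add_mul_one_sub_measureReal hX (hG.sqrt.const_mul _) hε hXε
          (ae_of_all _ fun _ ↦ by positivity) hXG'
    _ ≤ √γ * √(∫ ω, G ω ∂μ) + ε * δ := by
        rw [integral_const_mul]
        gcongr
        · exact integral_sqrt_le_sqrt_integral hG hG0
        · linarith

end MeasureTheory

theorem stmt_10_general {Ω : Type*} [MeasurableSpace Ω] (μ : Measure Ω) [IsProbabilityMeasure μ]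
    (T : ℕ) (X Γ G : ℕ → Ω → ℝ) (γ C ε : ℝ) (δ : ℕ → ℝ)
    (hγ : 0 < γ) (hε : 0 < ε)
    (hXbd : ∀ t < T, ∀ᵐ ω ∂μ, 0 ≤ X t ω ∧ X t ω ≤ ε)
    (A : ℕ → Set Ω)
    (hA : ∀ t < T, (1 : ℝ) - δ t ≤ (μ (A t)).toReal)
    (hXG : ∀ t < T, ∀ᵐ ω ∂μ, ω ∈ A t →
      X t ω = Real.sqrt (Γ t ω * G t ω) ∧ Γ t ω ≤ γ)
    (hG : ∀ t < T, ∀ᵐ ω ∂μ, 0 ≤ G t ω)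
    (hXint : ∀ t < T, Integrable (X t) μ)
    (hGint : ∀ t < T, Integrable (G t) μ)
    (hGsum : ∫ ω, (∑ t ∈ Finset.range T, G t ω) ∂μ ≤ C) :
    ∫ ω, (∑ t ∈ Finset.range T, X t ω) ∂μ ≤
      Real.sqrt (γ * C * T) + ε * ∑ t ∈ Finset.range T, δ t := by
  have hround (t : ℕ) (ht : t ∈ range T) :
      ∫ ω, X t ω ∂μ ≤ √γ * √(∫ ω, G t ω ∂μ) + ε * δ t := by
    rw [mem_range] at ht
    exact integral_le_sqrt_mul_sqrt_integral_add hγ.le hε.le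
      ((hXbd t ht).mono fun _ h ↦ h.2) (hA t ht) (hXG t ht) (hG t ht) (hXint t ht) (hGint t ht)
  have hGsum' : ∑ t ∈ range T, ∫ ω, G t ω ∂μ ≤ C := by
    rwa [← integral_finsetSum _ fun t ht ↦ hGint t (mem_range.1 ht)]
  rw [integral_finsetSum _ fun t ht ↦ hXint t (mem_range.1 ht)]
  calc ∑ t ∈ range T, ∫ ω, X t ω ∂μ
      ≤ √γ * ∑ t ∈ range T, √(∫ ω, G t ω ∂μ) + ε * ∑ t ∈ range T, δ t := by
        rw [mul_sum, mul_sum, ← sum_add_distrib]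
        exact sum_le_sum hround
    _ ≤ √γ * √(T * C) + ε * ∑ t ∈ range T, δ t := by
        grw [Real.sum_sqrt_le_sqrt_card_mul_sum _
          fun t ht ↦ integral_nonneg_of_ae (hG t (mem_range.1 ht)), card_range, hGsum']
    _ = √(γ * C * T) + ε * ∑ t ∈ range T, δ t := by
        rw [← Real.sqrt_mul hγ.le, mul_comm (T : ℝ), mul_assoc]

/-- Regret bound with high-probability, time-varying information ratio bounds. -/
theorem stmt_10 {Ω : Type*} [MeasurableSpace Ω] (μ : Measure Ω) [IsProbabilityMeasure μ]
    (T : ℕ) (X Γ G : ℕ → Ω → ℝ) (γ C ε : ℝ) (δ : ℕ → ℝ)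
    (hγ : 0 < γ) (hC : 0 < C) (hε : 0 < ε)
    (hXbd : ∀ t < T, ∀ᵐ ω ∂μ, 0 ≤ X t ω ∧ X t ω ≤ ε)
    (A : ℕ → Set Ω)
    (hA : ∀ t < T, (1 : ℝ) - δ t ≤ (μ (A t)).toReal)
    (hXG : ∀ t < T, ∀ᵐ ω ∂μ, ω ∈ A t →
      X t ω = Real.sqrt (Γ t ω * G t ω) ∧ Γ t ω ≤ γ)
    (hG : ∀ t < T, ∀ᵐ ω ∂μ, 0 ≤ G t ω)
    (hXint : ∀ t < T, Integrable (X t) μ)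
    (hGint : ∀ t < T, Integrable (G t) μ)
    (hGsum : ∫ ω, (∑ t ∈ Finset.range T, G t ω) ∂μ ≤ C) :
    ∫ ω, (∑ t ∈ Finset.range T, X t ω) ∂μ ≤
      Real.sqrt (γ * C * T) + ε * ∑ t ∈ Finset.range T, δ t :=
  stmt_10_general μ T X Γ G γ C ε δ hγ hε hXbd A hA hXG hG hXint hGint hGsum
end

section
/- Let p ∈ (0,1), K ≥ 2, and ε ∈ (0,1−p) sufficiently small (satisfying conditions (19a)–(19g) of the paper, e.g. ε < min{p,1−p}, (ε/K)² ≤ p(1−p)/4, ε/K ≤ p(1−p)/(4|2p−1|), ε ≤ (K−1)p/(K²(1−p)), ε ≤ (1−p)/K, ε ≤ (2(K−1)(1−p))/(3Kp)). In the uniform prior Bernoulli bandit of Example 1, the expected Shannon information gain at t = 0 of any action distribution π, g(π) = Σ_{a,a_*} π(a)(1/K) D_KL(P(R_{1,a} | A_* = a_*) ‖ P(R_{1,a})), satisfies g(π) ≤ ((K−1)ε²/K²) · 5/(2p(1−p)). -/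
/-!
The gain does not depend on `π`: whatever arm is played, averaging over `A_*` gives one divergence
`KL(p + ε ‖ r)` and `K - 1` divergences `KL(p ‖ r)`, each weighted `1 / K`, where `r = p + ε / K`.
Bounding KL by the χ² divergence `(q - r)² / (r (1 - r))` (from `log x ≤ x - 1`) leaves
`((K - 1) ε / K)² + (K - 1) (ε / K)²`, i.e. `(K - 1) ε² / K² / (r (1 - r))` after the `1 / K`, and
the smallness of `ε / K` keeps the Bernoulli variance `r (1 - r)` above `p (1 - p) / 2`.
-/

open Finset

noncomputable def bernoulliKL (q r : ℝ) : ℝ :=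
  q * Real.log (q / r) + (1 - q) * Real.log ((1 - q) / (1 - r))

lemma mul_log_div_le_mul_div_sub_one {q r : ℝ} (hq : 0 ≤ q) (hr : 0 < r) :
    q * Real.log (q / r) ≤ q * (q / r - 1) := by
  rcases hq.eq_or_lt with rfl | hq
  · simp
  · exact mul_le_mul_of_nonneg_left (Real.log_le_sub_one_of_pos (by positivity)) hq.le

lemma bernoulliKL_le_chiSq {q r : ℝ} (hq0 : 0 ≤ q) (hq1 : q ≤ 1) (hr0 : 0 < r) (hr1 : r < 1) :
    bernoulliKL q r ≤ (q - r) ^ 2 / (r * (1 - r)) := by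
  have hr1' : 0 < 1 - r := by linarith
  calc bernoulliKL q r ≤ q * (q / r - 1) + (1 - q) * ((1 - q) / (1 - r) - 1) :=
        add_le_add (mul_log_div_le_mul_div_sub_one hq0 hr0)
          (mul_log_div_le_mul_div_sub_one (by linarith) hr1')
    _ = (q - r) ^ 2 / (r * (1 - r)) := by field_simp; ring

lemma half_mul_one_sub_le_of_shift {p δ : ℝ} (hδ : 0 ≤ δ) (hδ2 : δ ^ 2 ≤ p * (1 - p) / 4)
    (hδp : δ * |2 * p - 1| ≤ p * (1 - p) / 4) :
    p * (1 - p) / 2 ≤ (p + δ) * (1 - (p + δ)) := by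
  have : δ * (1 - 2 * p) ≥ -(δ * |2 * p - 1|) := by
    nlinarith [le_abs_self (2 * p - 1)]
  nlinarith

lemma sum_sum_mul_ite_eq {ι : Type*} [Fintype ι] [DecidableEq ι] {w : ι → ℝ}
    (hw : ∑ a, w a = 1) (c x y : ℝ) (f : ℝ → ℝ) :
    ∑ a, ∑ b, w a * c * f (if a = b then x else y)
      = c * (f x + (Fintype.card ι - 1) * f y) := by
  have row_sum : ∀ a : ι, ∑ b, f (if a = b then x else y) = f x + (Fintype.card ι - 1) * f y := by
    intro a
    have split : ∀ b, f (if a = b then x else y) = f y + if a = b then f x - f y else 0 := by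
      intro b; split_ifs <;> ring
    simp only [split, sum_add_distrib, sum_const, card_univ, nsmul_eq_mul, sum_ite_eq,
      mem_univ, if_true]
    ring
  simp only [← mul_sum, row_sum, ← sum_mul, hw]
  ring

theorem stmt_13_general (K : ℕ) (hK : 2 ≤ K) (p ε : ℝ)
    (hp : p ∈ Set.Ioo (0:ℝ) 1) (hε : ε ∈ Set.Ioo 0 (1 - p))
    (h3 : (ε / K) ^ 2 ≤ p * (1 - p) / 4)
    (h4 : (ε / K) * |2 * p - 1| ≤ p * (1 - p) / 4)
    (kl : ℝ → ℝ → ℝ)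
    (hkl : ∀ q r, kl q r =
      q * Real.log (q / r) + (1 - q) * Real.log ((1 - q) / (1 - r)))
    (π : Fin K → ℝ) (hπ1 : ∑ a, π a = 1) :
    (∑ a : Fin K, ∑ astar : Fin K,
        π a * (1 / (K:ℝ)) * kl (if a = astar then p + ε else p) (p + ε / K))
      ≤ ((K:ℝ) - 1) * ε ^ 2 / (K:ℝ) ^ 2 * (5 / (2 * p * (1 - p))) := by
  obtain ⟨hp0, hp1⟩ := hp
  obtain ⟨hε0, hε1⟩ := hε
  have hK1 : (1:ℝ) ≤ K := by exact_mod_cast (by omega : 1 ≤ K)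
  have hδ : ε / K ≤ ε := div_le_self hε0.le hK1
  set r := p + ε / K
  have hr0 : 0 < r := by positivity
  have hr1 : r < 1 := by linarith
  have hvar : p * (1 - p) / 2 ≤ r * (1 - r) := half_mul_one_sub_le_of_shift (by positivity) h3 h4
  obtain rfl : kl = bernoulliKL := funext₂ hkl
  rw [sum_sum_mul_ite_eq hπ1 _ _ _ (bernoulliKL · r), Fintype.card_fin]
  have hvar0 : 0 < p * (1 - p) := mul_pos hp0 (by linarith)
  calc 1 / (K:ℝ) * (bernoulliKL (p + ε) r + (K - 1) * bernoulliKL p r)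
      ≤ 1 / K * ((p + ε - r) ^ 2 / (r * (1 - r)) + (K - 1) * ((p - r) ^ 2 / (r * (1 - r)))) := by
        gcongr 1 / K * (?_ + _ * ?_)
        · exact bernoulliKL_le_chiSq (by positivity) (by linarith) hr0 hr1
        · exact bernoulliKL_le_chiSq hp0.le hp1.le hr0 hr1
    _ = (K - 1) * ε ^ 2 / K ^ 2 / (r * (1 - r)) := by
        have : r * (1 - r) ≠ 0 := by positivity
        simp only [r] at this ⊢; field_simp; ring
    _ ≤ (K - 1) * ε ^ 2 / K ^ 2 / (p * (1 - p) / 2) := by gcongr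
    _ = (K - 1) * ε ^ 2 / K ^ 2 * (2 / (p * (1 - p))) := by field_simp
    _ ≤ (K - 1) * ε ^ 2 / K ^ 2 * (5 / (2 * p * (1 - p))) := by
        refine mul_le_mul_of_nonneg_left ?_ (by positivity)
        rw [div_le_div_iff₀ hvar0 (by positivity)]
        nlinarith

/-- Upper bound on the expected Shannon information gain at time 0 in Example 1. -/
theorem stmt_13 (K : ℕ) (hK : 2 ≤ K) (p ε : ℝ)
    (hp : p ∈ Set.Ioo (0:ℝ) 1) (hε : ε ∈ Set.Ioo 0 (1 - p))
    (h1 : ε < min p (1 - p))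
    (h2 : (ε / K) ^ 2 ≤ p * (1 - p) / 2)
    (h3 : (ε / K) ^ 2 ≤ p * (1 - p) / 4)
    (h4 : (ε / K) * |2 * p - 1| ≤ p * (1 - p) / 4)
    (h5 : ε ≤ ((K:ℝ) - 1) / (K:ℝ) ^ 2 * (p / (1 - p)))
    (h6 : ε ≤ (1 - p) / K)
    (h7 : ε ≤ ((K:ℝ) - 1) / K * (2 / 3) * ((1 - p) / p))
    (kl : ℝ → ℝ → ℝ)
    (hkl : ∀ q r, kl q r =
      q * Real.log (q / r) + (1 - q) * Real.log ((1 - q) / (1 - r)))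
    (π : Fin K → ℝ) (hπ0 : ∀ a, 0 ≤ π a) (hπ1 : ∑ a, π a = 1) :
    (∑ a : Fin K, ∑ astar : Fin K,
        π a * (1 / (K:ℝ)) * kl (if a = astar then p + ε else p) (p + ε / K))
      ≤ ((K:ℝ) - 1) * ε ^ 2 / (K:ℝ) ^ 2 * (5 / (2 * p * (1 - p))) :=
  stmt_13_general K hK p ε hp hε h3 h4 kl hkl π hπ1
end

section
/- Let p ∈ (0,1), K ≥ 2, and ε ∈ (0,1−p) sufficiently small as in the paper's conditions (19). In the uniform prior Bernoulli bandit of Example 1, at t = 0 the Shannon information ratio of any action distribution π, Γ(π) := (Δ(π))² / g(π), satisfies Γ(π) ≥ (2/5) p(1−p)(K−1). In particular, for p = 1/2 and K ≥ 2, Γ(π) ≥ K/20. -/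
/-!
At `t = 0` neither the regret `Δ = ε (K - 1) / K` nor the information gain depends on `π`: the
gain is the average over the optimal arm of `kl(mean of the played arm, p + ε / K)`. Bounding
each binary KL divergence by the χ² divergence, `kl(q, r) ≤ (q - r)² / (r (1 - r))` (from
`x log x ≤ x (x - 1)`), gives `g ≤ ε² (K - 1) / (K² r (1 - r))` with `r = p + ε / K`, hence
`Γ ≥ (K - 1) r (1 - r)`. Finally `ε / K < (1 - p) / 2`, so `r (1 - r) ≥ p (1 - p) / 2`.
-/

open InformationTheory

noncomputable def binaryKL (q r : ℝ) : ℝ :=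
  q * Real.log (q / r) + (1 - q) * Real.log ((1 - q) / (1 - r))

lemma klFun_le_sq_sub_one {x : ℝ} (hx : 0 ≤ x) : klFun x ≤ (x - 1) ^ 2 := by
  have hmul : x * Real.log x ≤ x * (x - 1) := by
    rcases hx.eq_or_lt with rfl | hx
    · simp
    · exact mul_le_mul_of_nonneg_left (Real.log_le_sub_one_of_pos hx) hx.le
  rw [klFun_apply]
  nlinarith

lemma binaryKL_eq_klFun (q : ℝ) {r : ℝ} (hr0 : 0 < r) (hr1 : r < 1) :
    binaryKL q r = r * klFun (q / r) + (1 - r) * klFun ((1 - q) / (1 - r)) := by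
  have hr1' : 1 - r ≠ 0 := by linarith
  simp only [binaryKL, klFun_apply]
  field_simp
  ring

lemma binaryKL_le_sq_div {q r : ℝ} (hq0 : 0 ≤ q) (hq1 : q ≤ 1) (hr0 : 0 < r) (hr1 : r < 1) :
    binaryKL q r ≤ (q - r) ^ 2 / (r * (1 - r)) := by
  have hr1' : 0 < 1 - r := by linarith
  have h₁ := klFun_le_sq_sub_one (div_nonneg hq0 hr0.le)
  have h₂ := klFun_le_sq_sub_one (div_nonneg (sub_nonneg.2 hq1) hr1'.le)
  calc binaryKL q r
      ≤ r * (q / r - 1) ^ 2 + (1 - r) * ((1 - q) / (1 - r) - 1) ^ 2 := by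
        rw [binaryKL_eq_klFun q hr0 hr1]
        gcongr
    _ = (q - r) ^ 2 / (r * (1 - r)) := by
        field_simp
        ring

lemma binaryKL_pos {q r : ℝ} (hq0 : 0 ≤ q) (hq1 : q ≤ 1) (hr0 : 0 < r) (hr1 : r < 1)
    (hqr : q ≠ r) : 0 < binaryKL q r := by
  have hr1' : 0 < 1 - r := by linarith
  have hdiv : 0 ≤ q / r := div_nonneg hq0 hr0.le
  have h₁ : 0 < klFun (q / r) := by
    refine (klFun_nonneg hdiv).lt_of_ne' fun h => hqr ?_
    rw [klFun_eq_zero_iff hdiv, div_eq_one_iff_eq hr0.ne'] at h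
    exact h
  have h₂ := klFun_nonneg (div_nonneg (sub_nonneg.2 hq1) hr1'.le)
  rw [binaryKL_eq_klFun q hr0 hr1]
  positivity

lemma Fintype.sum_apply_ite_eq {ι α R : Type*} [Fintype ι] [DecidableEq ι] [Ring R] (a : ι)
    (f : α → R) (x y : α) :
    ∑ b, f (if a = b then x else y) = f x + (Fintype.card ι - 1) * f y := by
  have hcompl : ∀ b ∈ ({a}ᶜ : Finset ι), f (if a = b then x else y) = f y := fun b hb => by
    rw [if_neg (by simpa [eq_comm] using hb)]
  rw [Fintype.sum_eq_add_sum_compl a, if_pos rfl, Finset.sum_congr rfl hcompl, Finset.sum_const,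
    Finset.card_compl, Finset.card_singleton, nsmul_eq_mul,
    Nat.cast_sub (Fintype.card_pos_iff.2 ⟨a⟩), Nat.cast_one]

lemma regret_eq {K : ℕ} (hK : K ≠ 0) (π : Fin K → ℝ) (hπ : ∑ a, π a = 1) (p ε : ℝ) :
    (∑ _a : Fin K, (1 / (K:ℝ)) * (p + ε)) - ∑ a, π a * (p + ε / K) = ε * (K - 1) / K := by
  rw [← Finset.sum_mul, ← Finset.sum_mul, hπ, Finset.sum_const, Finset.card_univ, Fintype.card_fin,
    nsmul_eq_mul]
  field_simp
  ring

lemma infoGain_eq {K : ℕ} (π : Fin K → ℝ) (hπ : ∑ a, π a = 1) (f : ℝ → ℝ) (x y : ℝ) :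
    ∑ a : Fin K, ∑ b : Fin K, π a * (1 / (K:ℝ)) * f (if a = b then x else y)
      = (f x + (K - 1) * f y) / K := by
  simp only [← Finset.mul_sum, Fintype.sum_apply_ite_eq, Fintype.card_fin, ← Finset.sum_mul, hπ]
  ring

lemma half_mul_one_sub_le {p δ : ℝ} (hp : 0 ≤ p) (hδ0 : 0 ≤ δ) (hδ1 : 2 * δ ≤ 1 - p) :
    p * (1 - p) / 2 ≤ (p + δ) * (1 - (p + δ)) := by
  calc p * (1 - p) / 2 = p * ((1 - p) / 2) := by ring
    _ ≤ (p + δ) * (1 - (p + δ)) := by gcongr <;> linarith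

section BernoulliBandit

variable {K p ε : ℝ}

/-- The optimal arm is uniform on `K` arms; the played arm has mean `p + ε` if it is the optimal
one and `p` otherwise, while its predictive mean is `p + ε / K`. -/
noncomputable def bernoulliInfoGain (K p ε : ℝ) : ℝ :=
  (binaryKL (p + ε) (p + ε / K) + (K - 1) * binaryKL p (p + ε / K)) / K

lemma bernoulliInfoGain_le (hK : 1 ≤ K) (hp : 0 < p) (hε0 : 0 ≤ ε) (hε1 : ε < 1 - p) :
    bernoulliInfoGain K p ε
      ≤ ε ^ 2 * (K - 1) / (K ^ 2 * ((p + ε / K) * (1 - (p + ε / K)))) := by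
  have hK0 : 0 < K := by linarith
  have hεK : ε / K ≤ ε := div_le_self hε0 hK
  have hq0 : 0 < p + ε / K := by positivity
  have hq1 : p + ε / K < 1 := by linarith
  have h₁ := binaryKL_le_sq_div (by linarith) (by linarith) hq0 hq1 (q := p + ε)
  have h₂ := binaryKL_le_sq_div hp.le (by linarith) hq0 hq1
  calc bernoulliInfoGain K p ε
      ≤ ((p + ε - (p + ε / K)) ^ 2 / ((p + ε / K) * (1 - (p + ε / K)))
          + (K - 1) * ((p - (p + ε / K)) ^ 2 / ((p + ε / K) * (1 - (p + ε / K))))) / K := by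
        unfold bernoulliInfoGain
        gcongr
    _ = ε ^ 2 * (K - 1) / (K ^ 2 * ((p + ε / K) * (1 - (p + ε / K)))) := by
        have : 1 - (p + ε / K) ≠ 0 := by linarith
        field_simp
        ring

lemma mul_one_sub_le_sq_regret_div_bernoulliInfoGain (hK : 1 < K) (hp : 0 < p) (hε0 : 0 < ε)
    (hε1 : ε < 1 - p) :
    (K - 1) * ((p + ε / K) * (1 - (p + ε / K)))
      ≤ (ε * (K - 1) / K) ^ 2 / bernoulliInfoGain K p ε := by
  have hK0 : 0 < K := by linarith
  have hεK : ε / K < ε := div_lt_self hε0 hK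
  have hq0 : 0 < p + ε / K := by positivity
  have hq1 : p + ε / K < 1 := by linarith
  have hg : 0 < bernoulliInfoGain K p ε := by
    have h₁ := binaryKL_pos (by linarith) (by linarith) hq0 hq1 (q := p + ε) (by linarith)
    have h₂ := binaryKL_pos hp.le (by linarith) hq0 hq1 (by linarith [div_pos hε0 hK0])
    have : 0 < K - 1 := by linarith
    unfold bernoulliInfoGain
    positivity
  calc (K - 1) * ((p + ε / K) * (1 - (p + ε / K)))
      = (ε * (K - 1) / K) ^ 2
          / (ε ^ 2 * (K - 1) / (K ^ 2 * ((p + ε / K) * (1 - (p + ε / K))))) := by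
        have : 1 - (p + ε / K) ≠ 0 := by linarith
        have : K - 1 ≠ 0 := by linarith
        field_simp
    _ ≤ _ :=
        div_le_div_of_nonneg_left (sq_nonneg _) hg (bernoulliInfoGain_le hK.le hp hε0.le hε1)

end BernoulliBandit

theorem stmt_14_general (K : ℕ) (hK : 2 ≤ K) (p ε : ℝ)
    (hp : p ∈ Set.Ioo (0:ℝ) 1) (hε : ε ∈ Set.Ioo 0 (1 - p))
    (kl : ℝ → ℝ → ℝ)
    (hkl : ∀ q r, kl q r =
      q * Real.log (q / r) + (1 - q) * Real.log ((1 - q) / (1 - r)))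
    (π : Fin K → ℝ) (hπ1 : ∑ a, π a = 1)
    (Δ g : ℝ)
    (hΔ : Δ = (∑ _a : Fin K, (1 / (K:ℝ)) * (p + ε))
      - (∑ a : Fin K, π a * (p + ε / K)))
    (hg : g = ∑ a : Fin K, ∑ astar : Fin K,
      π a * (1 / (K:ℝ)) * kl (if a = astar then p + ε else p) (p + ε / K)) :
    (2 / 5) * p * (1 - p) * ((K:ℝ) - 1) ≤ Δ ^ 2 / g ∧
    (p = 1 / 2 → (K:ℝ) / 20 ≤ Δ ^ 2 / g) := by
  obtain ⟨hp0, hp1⟩ := hp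
  obtain ⟨hε0, hε1⟩ := hε
  have hK' : (2:ℝ) ≤ K := by exact_mod_cast hK
  obtain rfl : kl = binaryKL := funext₂ hkl
  obtain rfl : Δ = ε * (K - 1) / K := hΔ.trans (regret_eq (by omega) π hπ1 p ε)
  obtain rfl : g = bernoulliInfoGain K p ε :=
    hg.trans (infoGain_eq π hπ1 (binaryKL · (p + ε / K)) _ _)
  have hratio :=
    mul_one_sub_le_sq_regret_div_bernoulliInfoGain (K := K) (by linarith) hp0 hε0 hε1
  have hq : p * (1 - p) / 2 ≤ (p + ε / K) * (1 - (p + ε / K)) :=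
    half_mul_one_sub_le hp0.le (by positivity)
      (by linarith [div_le_div_of_nonneg_left hε0.le two_pos hK'])
  have hmain := calc
    2 / 5 * p * (1 - p) * ((K:ℝ) - 1) ≤ (K - 1) * (p * (1 - p) / 2) := by
      nlinarith [mul_pos (mul_pos hp0 (sub_pos.2 hp1)) (by linarith : (0:ℝ) < K - 1)]
    _ ≤ (K - 1) * ((p + ε / K) * (1 - (p + ε / K))) := by gcongr; linarith
    _ ≤ _ := hratio
  refine ⟨hmain, fun hp_half => ?_⟩
  subst hp_half
  linarith

/-- Lower bound on the Shannon information ratio at time 0 in Example 1. -/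
theorem stmt_14 (K : ℕ) (hK : 2 ≤ K) (p ε : ℝ)
    (hp : p ∈ Set.Ioo (0:ℝ) 1) (hε : ε ∈ Set.Ioo 0 (1 - p))
    (h1 : ε < min p (1 - p))
    (h2 : (ε / K) ^ 2 ≤ p * (1 - p) / 2)
    (h3 : (ε / K) ^ 2 ≤ p * (1 - p) / 4)
    (h4 : (ε / K) * |2 * p - 1| ≤ p * (1 - p) / 4)
    (h5 : ε ≤ ((K:ℝ) - 1) / (K:ℝ) ^ 2 * (p / (1 - p)))
    (h6 : ε ≤ (1 - p) / K)
    (h7 : ε ≤ ((K:ℝ) - 1) / K * (2 / 3) * ((1 - p) / p))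
    (kl : ℝ → ℝ → ℝ)
    (hkl : ∀ q r, kl q r =
      q * Real.log (q / r) + (1 - q) * Real.log ((1 - q) / (1 - r)))
    (π : Fin K → ℝ) (hπ0 : ∀ a, 0 ≤ π a) (hπ1 : ∑ a, π a = 1)
    (Δ g : ℝ)
    (hΔ : Δ = (∑ _a : Fin K, (1 / (K:ℝ)) * (p + ε))
      - (∑ a : Fin K, π a * (p + ε / K)))
    (hg : g = ∑ a : Fin K, ∑ astar : Fin K,
      π a * (1 / (K:ℝ)) * kl (if a = astar then p + ε else p) (p + ε / K)) :
    (2 / 5) * p * (1 - p) * ((K:ℝ) - 1) ≤ Δ ^ 2 / g ∧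
    (p = 1 / 2 → (K:ℝ) / 20 ≤ Δ ^ 2 / g) :=
  stmt_14_general K hK p ε hp hε kl hkl π hπ1 Δ g hΔ hg
end

section
/- Let q_t ∈ (1/2, 1] and ε > 0, and suppose Δ ≤ ε(1 − q_t²) and g ≥ 2ε² q_t²(1 − q_t)² with g > 0. Then the ratio Γ = Δ²/g satisfies Γ ≤ (1+q_t)²/(2 q_t²) ≤ 8. -/
/-!
Since `1 - q² = (1 - q)(1 + q)`, the bound on `Δ` gives `Δ² ≤ ε²(1 - q)²(1 + q)²`, and the factor
`ε²(1 - q)²` is exactly what the lower bound on `g` controls, leaving `(1 + q)² / (2q²)`.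
For `q > 1/2` one has `(1 + q) / q < 3`, so this is below `9/2`.
-/

lemma sq_div_le_of_le_mul_one_sub_sq {q ε Δ g : ℝ} (hq : q ≠ 0) (hΔ0 : 0 ≤ Δ)
    (hΔ : Δ ≤ ε * (1 - q ^ 2)) (hg : 2 * ε ^ 2 * q ^ 2 * (1 - q) ^ 2 ≤ g) (hgpos : 0 < g) :
    Δ ^ 2 / g ≤ (1 + q) ^ 2 / (2 * q ^ 2) := by
  rw [div_le_div_iff₀ hgpos (by positivity)]
  calc Δ ^ 2 * (2 * q ^ 2)
      ≤ (ε * (1 - q ^ 2)) ^ 2 * (2 * q ^ 2) := by gcongr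
    _ = 2 * ε ^ 2 * q ^ 2 * (1 - q) ^ 2 * (1 + q) ^ 2 := by ring
    _ ≤ (1 + q) ^ 2 * g := by rw [mul_comm]; gcongr

lemma one_add_sq_div_two_mul_sq_lt {q : ℝ} (hq : 1 / 2 < q) :
    (1 + q) ^ 2 / (2 * q ^ 2) < 9 / 2 := by
  have hq0 : 0 < q := by linarith
  rw [div_lt_iff₀ (by positivity)]
  nlinarith

theorem stmt_18_general (q ε Δ g : ℝ) (hq : q ∈ Set.Ioc (1/2 : ℝ) 1)
    (hΔ0 : 0 ≤ Δ) (hΔ : Δ ≤ ε * (1 - q ^ 2))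
    (hg : 2 * ε ^ 2 * q ^ 2 * (1 - q) ^ 2 ≤ g) (hgpos : 0 < g) :
    Δ ^ 2 / g ≤ (1 + q) ^ 2 / (2 * q ^ 2) ∧ Δ ^ 2 / g ≤ 8 := by
  have hratio := sq_div_le_of_le_mul_one_sub_sq (by linarith [hq.1]) hΔ0 hΔ hg hgpos
  refine ⟨hratio, ?_⟩
  calc Δ ^ 2 / g ≤ (1 + q) ^ 2 / (2 * q ^ 2) := hratio
    _ ≤ 9 / 2 := (one_add_sq_div_two_mul_sq_lt hq.1).le
    _ ≤ 8 := by norm_num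

/-- When the maximal posterior probability exceeds 1/2, the Shannon information ratio
of Thompson sampling is at most 8. -/
theorem stmt_18 (q ε Δ g : ℝ) (hq : q ∈ Set.Ioc (1/2 : ℝ) 1) (hε : 0 < ε)
    (hΔ0 : 0 ≤ Δ) (hΔ : Δ ≤ ε * (1 - q ^ 2))
    (hg : 2 * ε ^ 2 * q ^ 2 * (1 - q) ^ 2 ≤ g) (hgpos : 0 < g) :
    Δ ^ 2 / g ≤ (1 + q) ^ 2 / (2 * q ^ 2) ∧ Δ ^ 2 / g ≤ 8 :=
  stmt_18_general q ε Δ g hq hΔ0 hΔ hg hgpos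
end
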